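/- arXiv:quant-ph/0506241 — 2 statements merged into one kernel-verified Lean document; each statement's English description precedes it below -/
import Mathlib

section
/- Let ψ be a nonzero n-qubit state vector with triples T_k. If dim_ℝ⟨T_j ∪ {−iψ}⟩ = 3 for some 1 ≤ j ≤ n, then the j-th qubit is unentangled: ψ factors (after placing qubit j first) as χ ⊗ φ, where χ is a single-qubit state vector and φ is an (n−1)-qubit state vector. -/
/-- An `n`-qubit state vector, identified with its coefficient function. -/
abbrev QState (n : ℕ) := (Fin n → Fin 2) → ℂ

/-- Complement the `k`-th bit of a multi-index. -/
def flipBit {n : ℕ} (k : Fin n) (I : Fin n → Fin 2) : Fin n → Fin 2 :=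
  Function.update I k (1 - I k)

/-- `(A_k ψ)(I) = i (−1)^{i_k} c_I`. -/
def Aop {n : ℕ} (k : Fin n) (ψ : QState n) : QState n :=
  fun I => Complex.I * (-1 : ℂ) ^ ((I k : ℕ)) * ψ I

/-- `(B_k ψ)(I) = (−1)^{i_k} c_{I_k}`. -/
def Bop {n : ℕ} (k : Fin n) (ψ : QState n) : QState n :=
  fun I => (-1 : ℂ) ^ ((I k : ℕ)) * ψ (flipBit k I)

/-- `(C_k ψ)(I) = i c_{I_k}`. -/
def Cop {n : ℕ} (k : Fin n) (ψ : QState n) : QState n :=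
  fun I => Complex.I * ψ (flipBit k I)

/-- The triple `T_k = {A_k ψ, B_k ψ, C_k ψ}`. -/
def triple {n : ℕ} (k : Fin n) (ψ : QState n) : Set (QState n) :=
  {Aop k ψ, Bop k ψ, Cop k ψ}

/-- Real inner product: the real part of the Hermitian inner product. -/
def rdot {n : ℕ} (φ ψ : QState n) : ℝ :=
  ∑ I : Fin n → Fin 2, ((starRingEnd ℂ) (φ I) * ψ I).re

/-- Real dimension of the span of a set of vectors. -/
noncomputable def rdim {n : ℕ} (S : Set (QState n)) : ℕ :=
  Module.finrank ℝ (Submodule.span ℝ S)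

/-- The set of columns of the matrix `M` associated to `ψ`. -/
def columns {n : ℕ} (ψ : QState n) : Set (QState n) :=
  (⋃ k : Fin n, triple k ψ) ∪ {(-Complex.I) • ψ}

/-- `rank_ℝ M`: the real dimension of the span of the columns of `M`. -/
noncomputable def rankM {n : ℕ} (ψ : QState n) : ℕ := rdim (columns ψ)

/-- The action of `(U_1, …, U_n) ∈ SU(2)^n` on an `n`-qubit state,
`U_1 ⊗ ⋯ ⊗ U_n`. -/
noncomputable def actLU {n : ℕ} (U : ∀ _ : Fin n, Matrix.specialUnitaryGroup (Fin 2) ℂ)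
    (ψ : QState n) : QState n :=
  fun I => ∑ J : Fin n → Fin 2, (∏ k : Fin n, (U k : Matrix (Fin 2) (Fin 2) ℂ) (I k) (J k)) * ψ J

/-- Local unitary equivalence of two state vectors. -/
def LUEquiv {n : ℕ} (ψ ψ' : QState n) : Prop :=
  ∃ U : ∀ _ : Fin n, Matrix.specialUnitaryGroup (Fin 2) ℂ, actLU U ψ = ψ'

/-- Tensor product of coefficient functions. -/
def tensorState {n₁ n₂ : ℕ} (ψ₁ : QState n₁) (ψ₂ : QState n₂) : QState (n₁ + n₂) :=
  fun I => ψ₁ (fun k => I (Fin.castAdd n₂ k)) * ψ₂ (fun k => I (Fin.natAdd n₁ k))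

/-- A perfect matching of the `n` qubits, encoded as an involution with no fixed
point when `n` is even and exactly one fixed point (the leftover qubit) when `n`
is odd. -/
def IsMatching {n : ℕ} (m : Fin n → Fin n) : Prop :=
  Function.Involutive m ∧ (Finset.univ.filter fun k => m k = k).card = n % 2

/-- The singlet product for a matching `m`: the tensor product over matched pairs
of `|00⟩ + |11⟩`, times the single-qubit vector `χ` in the leftover qubit when `n`
is odd. -/
def singletProduct {n : ℕ} (m : Fin n → Fin n) (χ : Fin 2 → ℂ) : QState n :=
  fun I => (∏ k : Fin n, if I k = I (m k) then (1 : ℂ) else 0) *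
    ∏ k ∈ Finset.univ.filter (fun k => m k = k), χ (I k)

/-- The minimum possible rank of `M`: `3n/2 + 1` for even `n`, `(3n+1)/2 + 1` for odd `n`. -/
def minRank (n : ℕ) : ℕ := if Even n then 3 * n / 2 + 1 else (3 * n + 1) / 2 + 1
section Aux
variable {n : ℕ}

lemma fin2_cases (x : Fin 2) : x = 0 ∨ x = 1 := by fin_cases x <;> simp

lemma flipBit_apply_self (k : Fin n) (I : Fin n → Fin 2) : flipBit k I k = 1 - I k := by
  simp [flipBit]

lemma flipBit_involutive (k : Fin n) : Function.Involutive (flipBit k) := by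
  intro I; funext l
  by_cases h : l = k
  · subst h
    simp only [flipBit, Function.update_self]
    rcases fin2_cases (I l) with h1 | h1 <;> rw [h1] <;> decide
  · simp [flipBit, Function.update_of_ne h]

lemma sum_flip_pair_zero {f : (Fin n → Fin 2) → ℝ} (j : Fin n)
    (hf : ∀ I, f I + f (flipBit j I) = 0) : ∑ I, f I = 0 := by
  have h1 : ∑ I, f (flipBit j I) = ∑ I, f I := Equiv.sum_comp ((flipBit_involutive j).toPerm _) f
  have h2 : ∑ I, (f I + f (flipBit j I)) = 0 := by
    simp [hf]
  rw [Finset.sum_add_distrib, h1] at h2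
  linarith

end Aux
section Aux2
variable {n : ℕ}

lemma conj_mul_re (w : ℂ) : ((starRingEnd ℂ) w * w).re = Complex.normSq w := by
  simp [Complex.mul_re, Complex.normSq_apply]

lemma rdot_self_A (j : Fin n) (ψ : QState n) :
    rdot (Aop j ψ) (Aop j ψ) = ∑ I, Complex.normSq (ψ I) := by
  unfold rdot Aop
  refine Finset.sum_congr rfl fun I _ => ?_
  rw [conj_mul_re]
  rcases fin2_cases (I j) with h | h <;> rw [h] <;>
    simp [Complex.normSq_mul]

lemma rdot_self_B (j : Fin n) (ψ : QState n) :
    rdot (Bop j ψ) (Bop j ψ) = ∑ I, Complex.normSq (ψ I) := by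
  unfold rdot Bop
  have h1 : ∀ I : Fin n → Fin 2,
      ((starRingEnd ℂ) ((-1:ℂ) ^ ((I j : ℕ)) * ψ (flipBit j I)) *
        ((-1:ℂ) ^ ((I j : ℕ)) * ψ (flipBit j I))).re = Complex.normSq (ψ (flipBit j I)) := by
    intro I
    rw [conj_mul_re]
    rcases fin2_cases (I j) with h | h <;> rw [h] <;> simp [Complex.normSq_mul]
  rw [Finset.sum_congr rfl fun I _ => h1 I]
  exact Equiv.sum_comp ((flipBit_involutive j).toPerm _) (fun I => Complex.normSq (ψ I))

lemma rdot_self_C (j : Fin n) (ψ : QState n) :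
    rdot (Cop j ψ) (Cop j ψ) = ∑ I, Complex.normSq (ψ I) := by
  unfold rdot Cop
  have h1 : ∀ I : Fin n → Fin 2,
      ((starRingEnd ℂ) (Complex.I * ψ (flipBit j I)) * (Complex.I * ψ (flipBit j I))).re
        = Complex.normSq (ψ (flipBit j I)) := by
    intro I; rw [conj_mul_re]; simp [Complex.normSq_mul]
  rw [Finset.sum_congr rfl fun I _ => h1 I]
  exact Equiv.sum_comp ((flipBit_involutive j).toPerm _) (fun I => Complex.normSq (ψ I))

end Aux2
section Aux3
variable {n : ℕ}

lemma rdot_AB (j : Fin n) (ψ : QState n) : rdot (Aop j ψ) (Bop j ψ) = 0 := by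
  unfold rdot
  apply sum_flip_pair_zero j
  intro I
  simp only [Aop, Bop, flipBit_involutive j I, flipBit_apply_self]
  rcases fin2_cases (I j) with h | h <;> rw [h] <;> norm_num <;> ring

lemma rdot_AC (j : Fin n) (ψ : QState n) : rdot (Aop j ψ) (Cop j ψ) = 0 := by
  unfold rdot
  apply sum_flip_pair_zero j
  intro I
  simp only [Aop, Cop, flipBit_involutive j I, flipBit_apply_self]
  rcases fin2_cases (I j) with h | h <;> rw [h] <;> norm_num <;> ring

lemma rdot_BC (j : Fin n) (ψ : QState n) : rdot (Bop j ψ) (Cop j ψ) = 0 := by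
  unfold rdot
  apply sum_flip_pair_zero j
  intro I
  simp only [Bop, Cop, flipBit_involutive j I, flipBit_apply_self]
  rcases fin2_cases (I j) with h | h <;> rw [h] <;> norm_num <;> ring

end Aux3
section Aux4
variable {n : ℕ}

lemma rdot_comm (φ ψ : QState n) : rdot φ ψ = rdot ψ φ := by
  unfold rdot
  refine Finset.sum_congr rfl fun I _ => ?_
  simp [Complex.mul_re, Complex.conj_re, Complex.conj_im]
  ring

lemma rdot_add_right (φ x y : QState n) : rdot φ (x + y) = rdot φ x + rdot φ y := by
  unfold rdot
  rw [← Finset.sum_add_distrib]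
  refine Finset.sum_congr rfl fun I _ => ?_
  simp [mul_add]

lemma rdot_smul_right (φ : QState n) (r : ℝ) (x : QState n) :
    rdot φ (r • x) = r * rdot φ x := by
  unfold rdot
  rw [Finset.mul_sum]
  refine Finset.sum_congr rfl fun I _ => ?_
  simp [Complex.real_smul, Complex.mul_re]
  ring

lemma rdot_zero_right (φ : QState n) : rdot φ 0 = 0 := by
  simp [rdot]

lemma li_ABC (j : Fin n) (ψ : QState n) (hψ : ψ ≠ 0) :
    LinearIndependent ℝ ![Aop j ψ, Bop j ψ, Cop j ψ] := by
  have hN : 0 < ∑ I, Complex.normSq (ψ I) := by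
    obtain ⟨I0, hI0⟩ : ∃ I, ψ I ≠ 0 := by
      by_contra h'; push_neg at h'; exact hψ (funext h')
    exact Finset.sum_pos' (fun i _ => Complex.normSq_nonneg _)
      ⟨I0, Finset.mem_univ _, Complex.normSq_pos.mpr hI0⟩
  rw [Fintype.linearIndependent_iff]
  intro g hg
  have hg' : g 0 • Aop j ψ + g 1 • Bop j ψ + g 2 • Cop j ψ = 0 := by
    simpa [Fin.sum_univ_three] using hg
  have key : ∀ v : QState n, rdot v (Aop j ψ) = ∑ I, Complex.normSq (ψ I) * (if v = Aop j ψ then 1 else 0) → True := fun _ _ => trivial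
  have e0 : rdot (Aop j ψ) (g 0 • Aop j ψ + g 1 • Bop j ψ + g 2 • Cop j ψ) = 0 := by
    rw [hg', rdot_zero_right]
  have e1 : rdot (Bop j ψ) (g 0 • Aop j ψ + g 1 • Bop j ψ + g 2 • Cop j ψ) = 0 := by
    rw [hg', rdot_zero_right]
  have e2 : rdot (Cop j ψ) (g 0 • Aop j ψ + g 1 • Bop j ψ + g 2 • Cop j ψ) = 0 := by
    rw [hg', rdot_zero_right]
  rw [rdot_add_right, rdot_add_right, rdot_smul_right, rdot_smul_right, rdot_smul_right,
    rdot_self_A, rdot_AB, rdot_AC] at e0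
  rw [rdot_add_right, rdot_add_right, rdot_smul_right, rdot_smul_right, rdot_smul_right,
    rdot_comm (Bop j ψ) (Aop j ψ), rdot_AB, rdot_self_B, rdot_BC] at e1
  rw [rdot_add_right, rdot_add_right, rdot_smul_right, rdot_smul_right, rdot_smul_right,
    rdot_comm (Cop j ψ) (Aop j ψ), rdot_AC, rdot_comm (Cop j ψ) (Bop j ψ), rdot_BC,
    rdot_self_C] at e2
  have h0 : g 0 = 0 := by
    have := e0; nlinarith [hN]
  have h1 : g 1 = 0 := by nlinarith [hN, e1]
  have h2 : g 2 = 0 := by nlinarith [hN, e2]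
  intro i; fin_cases i <;> assumption

end Aux4
section Aux5
variable {n : ℕ}

lemma neg_I_smul_mem_span (j : Fin n) (ψ : QState n) (hψ : ψ ≠ 0)
    (h : rdim (triple j ψ ∪ {(-Complex.I) • ψ}) = 3) :
    ∃ α β γ : ℝ, (-Complex.I) • ψ = α • Aop j ψ + (β • Bop j ψ + γ • Cop j ψ) := by
  set a := Aop j ψ; set b := Bop j ψ; set c := Cop j ψ
  have hrange : Set.range ![a, b, c] = {a, b, c} := by
    ext x
    constructor
    · rintro ⟨i, rfl⟩; fin_cases i <;> simp
    · rintro (rfl | rfl | rfl)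
      exacts [⟨0, rfl⟩, ⟨1, rfl⟩, ⟨2, rfl⟩]
  have h3 : Module.finrank ℝ (Submodule.span ℝ ({a, b, c} : Set (QState n))) = 3 := by
    rw [← hrange]
    rw [finrank_span_eq_card (li_ABC j ψ hψ)]
    simp
  have hfin : FiniteDimensional ℝ
      (Submodule.span ℝ (triple j ψ ∪ {(-Complex.I) • ψ})) := by
    apply FiniteDimensional.span_of_finite
    apply Set.Finite.union
    · show ({a, b, c} : Set (QState n)).Finite
      exact (Set.finite_singleton c).insert b |>.insert a
    · exact Set.finite_singleton _
  have hle : Submodule.span ℝ ({a, b, c} : Set (QState n)) ≤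
      Submodule.span ℝ (triple j ψ ∪ {(-Complex.I) • ψ}) :=
    Submodule.span_mono Set.subset_union_left
  have heq := Submodule.eq_of_le_of_finrank_eq hle (by rw [h3]; exact h.symm)
  have hmem : (-Complex.I) • ψ ∈ Submodule.span ℝ ({a, b, c} : Set (QState n)) := by
    rw [heq]
    exact Submodule.subset_span (Set.mem_union_right _ rfl)
  rw [show ({a, b, c} : Set (QState n)) = insert a {b, c} from rfl,
    Submodule.mem_span_insert] at hmem
  obtain ⟨α, z, hz, hd⟩ := hmem
  rw [show ({b, c} : Set (QState n)) = insert b {c} from rfl,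
    Submodule.mem_span_insert] at hz
  obtain ⟨β, z', hz', hz''⟩ := hz
  rw [Submodule.mem_span_singleton] at hz'
  obtain ⟨γ, rfl⟩ := hz'
  exact ⟨α, β, γ, by rw [hd, hz'']⟩

end Aux5
section Aux6
variable {n : ℕ}

lemma factor_of_linrel {m : ℕ} (u v : ℂ) (huv : ¬(u = 0 ∧ v = 0))
    (c0 c1 : (Fin m → Fin 2) → ℂ) (h : ∀ J, v * c1 J = u * c0 J) :
    ∃ (χ0 χ1 : ℂ) (φ : (Fin m → Fin 2) → ℂ),
      ∀ J, c0 J = χ0 * φ J ∧ c1 J = χ1 * φ J := by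
  have hD : (0 : ℝ) < Complex.normSq v + Complex.normSq u := by
    rcases not_and_or.mp huv with hu | hv
    · have := Complex.normSq_pos.mpr hu
      have := Complex.normSq_nonneg v
      linarith
    · have := Complex.normSq_pos.mpr hv
      have := Complex.normSq_nonneg u
      linarith
  have hD' : ((Complex.normSq v + Complex.normSq u : ℝ) : ℂ) ≠ 0 := by
    exact_mod_cast Complex.ofReal_ne_zero.mpr (ne_of_gt hD)
  refine ⟨v, u, fun J => ((starRingEnd ℂ) v * c0 J + (starRingEnd ℂ) u * c1 J) /
    ((Complex.normSq v + Complex.normSq u : ℝ) : ℂ), fun J => ?_⟩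
  have h1 := Complex.mul_conj v
  have h2 := Complex.mul_conj u
  constructor
  · dsimp only
    rw [← mul_div_assoc, eq_comm, div_eq_iff hD', mul_comm (c0 J)]
    push_cast
    linear_combination (starRingEnd ℂ) u * h J + c0 J * h1 + c0 J * h2
  · dsimp only
    rw [← mul_div_assoc, eq_comm, div_eq_iff hD', mul_comm (c1 J)]
    push_cast
    linear_combination (-(starRingEnd ℂ) v) * h J + c1 J * h1 + c1 J * h2

lemma flipBit_insertNth (j : Fin (n + 1)) (b : Fin 2) (J : Fin n → Fin 2) :
    flipBit j (j.insertNth b J) = j.insertNth (1 - b) J := by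
  funext l
  by_cases hl : l = j
  · subst hl
    rw [flipBit_apply_self, Fin.insertNth_apply_same, Fin.insertNth_apply_same]
  · obtain ⟨i, rfl⟩ := Fin.exists_succAbove_eq hl
    simp [flipBit, Function.update_of_ne hl, Fin.insertNth_apply_succAbove]

lemma insertNth_reconstruct (j : Fin (n + 1)) (I : Fin (n + 1) → Fin 2) :
    j.insertNth (I j) (fun i => I (j.succAbove i)) = I :=
  Fin.insertNth_self_removeNth j I

end Aux6

/-- If a triple together with the column `−iψ` spans only three
dimensions, then the corresponding qubit is unentangled: `ψ` factors (after
placing qubit `j` first) as `χ ⊗ φ` with `χ` a single-qubit state vector. -/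
theorem unentangled_of_triple_span_three {n : ℕ} (ψ : QState (n + 1)) (hψ : ψ ≠ 0)
    (j : Fin (n + 1))
    (h : rdim (triple j ψ ∪ {(-Complex.I) • ψ}) = 3) :
    ∃ (χ : Fin 2 → ℂ) (φ : QState n), ∀ I : Fin (n + 1) → Fin 2,
      ψ I = χ (I j) * φ (fun i => I (j.succAbove i)) := by
  obtain ⟨α, β, γ, hcomb⟩ := neg_I_smul_mem_span j ψ hψ h
  have hpt : ∀ I : Fin (n+1) → Fin 2,
      -Complex.I * ψ I = (α : ℂ) * (Complex.I * (-1:ℂ)^((I j : ℕ)) * ψ I)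
        + ((β : ℂ) * ((-1:ℂ)^((I j : ℕ)) * ψ (flipBit j I))
        + (γ : ℂ) * (Complex.I * ψ (flipBit j I))) := by
    intro I
    have := congrFun hcomb I
    simpa [Aop, Bop, Cop, Pi.add_apply, Pi.smul_apply, Complex.real_smul,
      smul_eq_mul, mul_assoc] using this
  set c0 : (Fin n → Fin 2) → ℂ := fun J => ψ (j.insertNth 0 J) with hc0
  set c1 : (Fin n → Fin 2) → ℂ := fun J => ψ (j.insertNth 1 J) with hc1
  set u : ℂ := -Complex.I * (1 + α) with hu
  set v : ℂ := (β : ℂ) + (γ : ℂ) * Complex.I with hv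
  set t : ℂ := -Complex.I * (1 - α) with ht
  set w : ℂ := -(β : ℂ) + (γ : ℂ) * Complex.I with hw
  have rel1 : ∀ J, v * c1 J = u * c0 J := by
    intro J
    have h0 := hpt (j.insertNth 0 J)
    rw [flipBit_insertNth, show ((1 : Fin 2) - 0) = 1 from rfl] at h0
    simp only [Fin.insertNth_apply_same, Fin.val_zero, pow_zero, mul_one, one_mul] at h0
    rw [hv, hu, hc0, hc1]
    dsimp only
    linear_combination -h0
  have rel2 : ∀ J, t * c1 J = w * c0 J := by
    intro J
    have h0 := hpt (j.insertNth 1 J)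
    rw [flipBit_insertNth, show ((1 : Fin 2) - 1) = 0 from rfl] at h0
    simp only [Fin.insertNth_apply_same, Fin.val_one, pow_one] at h0
    rw [ht, hw, hc0, hc1]
    dsimp only
    linear_combination h0
  suffices hs : ∃ (χ0 χ1 : ℂ) (φ : (Fin n → Fin 2) → ℂ),
      ∀ J, c0 J = χ0 * φ J ∧ c1 J = χ1 * φ J by
    obtain ⟨χ0, χ1, φ, hfac⟩ := hs
    refine ⟨![χ0, χ1], φ, fun I => ?_⟩
    have hI := insertNth_reconstruct j I
    rcases fin2_cases (I j) with hj | hj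
    · conv_lhs => rw [← hI]
      rw [hj]
      exact (hfac _).1
    · conv_lhs => rw [← hI]
      rw [hj]
      exact (hfac _).2
  by_cases hcase : u = 0 ∧ v = 0
  · have htne : ¬(w = 0 ∧ t = 0) := by
      rintro ⟨-, ht0⟩
      have hsum : u + t = -2 * Complex.I := by rw [hu, ht]; ring
      rw [hcase.1, ht0] at hsum
      simp [Complex.ext_iff] at hsum
    exact factor_of_linrel w t htne c0 c1 rel2
  · exact factor_of_linrel u v hcase c0 c1 rel1
end

section
/- Two singlet products are local unitary equivalent (up to a nonzero scalar) if and only if their perfect matchings of the qubits into entangled pairs are the same. More precisely, if ψ and ψ' are n-qubit singlet products corresponding to perfect matchings P and P' of {1,…,n} (each with the same leftover qubit when n is odd), then ψ is local unitary equivalent to a nonzero scalar multiple of ψ' if and only if P = P'. -/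
/-! A state that is a product across a bipartition `p | ¬p` of the qubits stays one under
local unitaries. The singlet product of a matching `m` is a product across every
`m`-invariant bipartition. Conversely, if it is a product across `p | ¬p` and `m k ≠ k`
with `p k`, then `p (m k)`: otherwise the `2 × 2` minor `ψ(I) ψ(J) - ψ(K) ψ(L)` with `I`
constant, `J` obtained from `I` by flipping the pair `{k, m k}`, and `K, L` their mixtures
across the cut, would not vanish. Applied to the cut `{k, m k}`, this forces `m' k = m k`. -/

section ProductAcross

variable {n : ℕ} (p : Fin n → Prop)

def IsProductAcross (ψ : QState n) : Prop :=
  ∃ (φ : ({t // p t} → Fin 2) → ℂ) (θ : ({t // ¬p t} → Fin 2) → ℂ),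
    ∀ I, ψ I = φ (Subtype.restrict p I) * θ (Subtype.restrict (¬p ·) I)

variable {p}

lemma IsProductAcross.smul {ψ : QState n} (h : IsProductAcross p ψ) (c : ℂ) :
    IsProductAcross p (c • ψ) := by
  obtain ⟨φ, θ, hψ⟩ := h
  exact ⟨c • φ, θ, fun I => by simp only [Pi.smul_apply, hψ I, smul_eq_mul, mul_assoc]⟩

variable [DecidablePred p]

lemma IsProductAcross.actLU {ψ : QState n} (h : IsProductAcross p ψ)
    (U : ∀ _ : Fin n, Matrix.specialUnitaryGroup (Fin 2) ℂ) :
    IsProductAcross p (actLU U ψ) := by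
  obtain ⟨φ, θ, hψ⟩ := h
  let u (I J : Fin n → Fin 2) (t : Fin n) : ℂ := (U t : Matrix (Fin 2) (Fin 2) ℂ) (I t) (J t)
  refine ⟨fun x => ∑ a, (∏ t : {t // p t}, (U t : Matrix (Fin 2) (Fin 2) ℂ) (x t) (a t)) * φ a,
    fun y => ∑ b, (∏ t : {t // ¬p t}, (U t : Matrix (Fin 2) (Fin 2) ℂ) (y t) (b t)) * θ b,
    fun I => ?_⟩
  rw [Finset.sum_mul_sum, ← Fintype.sum_prod_type']
  refine Fintype.sum_equiv (Equiv.piEquivPiSubtypeProd p fun _ => Fin 2) _ _ fun J => ?_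
  rw [hψ J, ← Fintype.prod_subtype_mul_prod_subtype p (u I J)]
  exact mul_mul_mul_comm _ _ _ _

lemma IsProductAcross.mul_eq_mul_mix {ψ : QState n} (h : IsProductAcross p ψ)
    (I J : Fin n → Fin 2) :
    ψ I * ψ J = ψ (fun t => if p t then I t else J t) * ψ (fun t => if p t then J t else I t) := by
  obtain ⟨φ, θ, hψ⟩ := h
  simp only [hψ]
  have hp (K L : Fin n → Fin 2) :
      Subtype.restrict p (fun t => if p t then K t else L t) = Subtype.restrict p K :=
    funext fun t => if_pos t.2
  have hnp (K L : Fin n → Fin 2) :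
      Subtype.restrict (¬p ·) (fun t => if p t then K t else L t) = Subtype.restrict (¬p ·) L :=
    funext fun t => if_neg t.2
  rw [hp, hp, hnp, hnp]
  ring

lemma isProductAcross_prod (F : (Fin n → Fin 2) → Fin n → ℂ)
    (hF : ∀ I J t, (∀ s, (p s ↔ p t) → I s = J s) → F I t = F J t) :
    IsProductAcross p fun I => ∏ t, F I t := by
  refine ⟨fun x => ∏ t : {t // p t}, F (Function.extend Subtype.val x 0) t,
    fun y => ∏ t : {t // ¬p t}, F (Function.extend Subtype.val y 0) t, fun I => ?_⟩
  dsimp only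
  rw [← Fintype.prod_subtype_mul_prod_subtype p]
  congr 1 <;> refine Fintype.prod_congr _ _ fun t => hF _ _ _ fun s hs => ?_
  · exact (Subtype.val_injective.extend_apply (Subtype.restrict p I) 0 ⟨s, hs.mpr t.2⟩).symm
  · exact (Subtype.val_injective.extend_apply (Subtype.restrict (¬p ·) I) 0
      ⟨s, fun h => t.2 (hs.mp h)⟩).symm

end ProductAcross

section SingletProduct

variable {n : ℕ} {m : Fin n → Fin n} {χ : Fin 2 → ℂ}

def singletFactor (m : Fin n → Fin n) (χ : Fin 2 → ℂ) (I : Fin n → Fin 2) (t : Fin n) : ℂ :=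
  (if I t = I (m t) then 1 else 0) * if m t = t then χ (I t) else 1

lemma singletProduct_eq_prod (m : Fin n → Fin n) (χ : Fin 2 → ℂ) :
    singletProduct m χ = fun I => ∏ t, singletFactor m χ I t := by
  funext I
  simp only [singletProduct, singletFactor, Finset.prod_mul_distrib, Finset.prod_filter]

lemma isProductAcross_singletProduct {p : Fin n → Prop} [DecidablePred p]
    (hp : ∀ t, p (m t) ↔ p t) (χ : Fin 2 → ℂ) : IsProductAcross p (singletProduct m χ) := by
  rw [singletProduct_eq_prod]
  refine isProductAcross_prod _ fun I J t hIJ => ?_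
  simp only [singletFactor, hIJ t Iff.rfl, hIJ (m t) (hp t)]

lemma singletProduct_apply_eq_zero {I : Fin n → Fin 2} {t : Fin n} (ht : I t ≠ I (m t)) :
    singletProduct m χ I = 0 :=
  mul_eq_zero_of_left (Finset.prod_eq_zero (Finset.mem_univ t) (if_neg ht)) _

lemma singletProduct_apply_ne_zero {I : Fin n → Fin 2} (hI : ∀ t, I t = I (m t))
    (hχ : ∀ t, m t = t → χ (I t) ≠ 0) : singletProduct m χ I ≠ 0 := by
  refine mul_ne_zero ?_ (Finset.prod_ne_zero_iff.mpr fun t ht => hχ t (Finset.mem_filter.mp ht).2)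
  rw [Finset.prod_eq_one fun t _ => if_pos (hI t)]
  exact one_ne_zero

lemma Function.Involutive.apply_mem_pair_iff (hm : Function.Involutive m) (k t : Fin n) :
    (m t = k ∨ m t = m k) ↔ (t = k ∨ t = m k) := by
  rw [hm.eq_iff, hm.injective.eq_iff, or_comm]

lemma IsProductAcross.apply_mem_of_singletProduct {p : Fin n → Prop} [DecidablePred p]
    (h : IsProductAcross p (singletProduct m χ)) (hm : Function.Involutive m) (hχ : χ ≠ 0)
    {k : Fin n} (hk : m k ≠ k) (hpk : p k) : p (m k) := by
  by_contra hpmk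
  obtain ⟨a, ha : χ a ≠ 0⟩ := Function.ne_iff.mp hχ
  have hba : 1 - a ≠ a := by fin_cases a <;> decide
  let I : Fin n → Fin 2 := fun _ => a
  let J : Fin n → Fin 2 := fun t => if t = k ∨ t = m k then 1 - a else a
  have hI : singletProduct m χ I ≠ 0 := singletProduct_apply_ne_zero (fun _ => rfl) fun _ _ => ha
  have hJ : singletProduct m χ J ≠ 0 := by
    refine singletProduct_apply_ne_zero (fun t => ?_) fun t ht => ?_
    · simp only [J, hm.apply_mem_pair_iff]
    · have hkt : t ≠ k := by rintro rfl; exact hk ht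
      have hmkt : t ≠ m k := by rintro rfl; exact hk (hm k ▸ ht).symm
      simpa only [J, hkt, hmkt, or_self, if_false] using ha
  have hmix : singletProduct m χ (fun t => if p t then I t else J t) = 0 := by
    refine singletProduct_apply_eq_zero (t := k) ?_
    simpa only [hpk, hpmk, if_true, if_false, J, true_or, or_true] using hba.symm
  exact mul_ne_zero hI hJ (by rw [h.mul_eq_mul_mix, hmix, zero_mul])

end SingletProduct

lemma actLU_one {n : ℕ} (ψ : QState n) : actLU 1 ψ = ψ := by
  funext I
  simp only [actLU, Pi.one_apply, OneMemClass.coe_one, Matrix.one_apply, Finset.prod_boole,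
    Finset.mem_univ, forall_const, ← funext_iff, ite_mul, one_mul, zero_mul, Finset.sum_ite_eq,
    if_true]

/-- Two singlet products (with the same leftover qubit when `n` is
odd, and the same fixed single-qubit vector there) are local unitary equivalent up
to a nonzero scalar if and only if their matchings of entangled pairs are the
same. -/
theorem singlet_products_lu_equiv_iff {n : ℕ} (m m' : Fin n → Fin n)
    (hm : IsMatching m) (hm' : IsMatching m')
    (hfix : ∀ k : Fin n, m k = k ↔ m' k = k)
    (χ : Fin 2 → ℂ) (hχ : χ ≠ 0) :
    (∃ (c : ℂ) (U : ∀ _ : Fin n, Matrix.specialUnitaryGroup (Fin 2) ℂ),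
        c ≠ 0 ∧ actLU U (singletProduct m χ) = c • singletProduct m' χ) ↔
      m = m' := by
  constructor
  · rintro ⟨c, U, hc, hU⟩
    funext k
    by_cases hk : m k = k
    · exact hk.trans ((hfix k).mp hk).symm
    have hk' : m' k ≠ k := mt (hfix k).mpr hk
    have hψ : IsProductAcross (fun t => t = k ∨ t = m k) (singletProduct m χ) :=
      isProductAcross_singletProduct (hm.1.apply_mem_pair_iff k) χ
    have hψ' : IsProductAcross (fun t => t = k ∨ t = m k) (singletProduct m' χ) := by
      simpa only [hU, smul_smul, inv_mul_cancel₀ hc, one_smul] using (hψ.actLU U).smul c⁻¹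
    exact ((hψ'.apply_mem_of_singletProduct hm'.1 hχ hk' (Or.inl rfl)).resolve_left hk').symm
  · rintro rfl
    exact ⟨1, 1, one_ne_zero, by rw [actLU_one, one_smul]⟩
end
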